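/- arXiv:2307.06889 — 2 statements merged into one kernel-verified Lean document; each statement's English description precedes it below -/
import Mathlib

section
/- The reward function r is submodular: for S₁ ⊆ S₂ ⊆ V and u ∉ S₂, the marginal gains satisfy r(S₁ ∪ {u}) - r(S₁) ≥ r(S₂ ∪ {u}) - r(S₂). -/
open MeasureTheory ProbabilityTheory

/-- A finite rooted tree given by a parent function. -/
structure ParentTree (V : Type*) where
  root : V
  parent : V → V
  parent_root : parent root = root
  reaches_root : ∀ v, ∃ n, parent^[n] v = root
  acyclic : ∀ v n, 0 < n → parent^[n] v = v → v = root

namespace ParentTree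

variable {V : Type*}

/-- `anc i j` : `i` is a strict ancestor of `j`. -/
def anc (T : ParentTree V) (i j : V) : Prop :=
  i ≠ j ∧ ∃ n, T.parent^[n] j = i

/-- The set of strict descendants of `i`. -/
def desc (T : ParentTree V) (i : V) : Set V := {v | T.anc i v}

/-- The number of strict descendants of `i`. -/
noncomputable def nd (T : ParentTree V) (i : V) : ℕ := (T.desc i).ncard

/-- The expected total reward of vaccinating the set `S`, where `p i = P(Z_i > τ)`. -/
noncomputable def reward (T : ParentTree V) (p : V → ℝ) (S : Finset V) : ℝ :=
  ∑ i ∈ S, ((T.nd i : ℝ) - ((⋃ j ∈ T.desc i ∩ (S : Set V), T.desc j).ncard : ℝ)) * p i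

end ParentTree

open ParentTree

/-!
Call `i ∈ S` the nearest `S`-ancestor of `v` if no element of `S` lies strictly between `i`
and `v`. The coefficient `n_i - |⋃_{j ∈ N_i ∩ S} N_j|` counts exactly the vertices whose nearest
`S`-ancestor is `i`, so `r(S) = ∑_v p(nearest S-ancestor of v)`. Since `p` increases down the
tree, the nearest `S`-ancestor of `v` is the one of largest weight, so `r(S)` is the sum over `v`
of the largest weight among the ancestors of `v` in `S` (or `0`). A maximum of nonnegative
weights over `S` is submodular in `S`, hence so is `r`.
-/

open Finset NNReal

theorem NNReal.sup_insert_sub_sup_le {ι : Type*} [DecidableEq ι] (w : ι → ℝ≥0)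
    {A B : Finset ι} (hAB : A ⊆ B) (u : ι) :
    (((insert u B).sup w : ℝ≥0) : ℝ) - (B.sup w : ℝ≥0) ≤
      (((insert u A).sup w : ℝ≥0) : ℝ) - (A.sup w : ℝ≥0) := by
  have hmono : ((A.sup w : ℝ≥0) : ℝ) ≤ (B.sup w : ℝ≥0) := by exact_mod_cast sup_mono hAB
  simp only [sup_insert, NNReal.coe_max, ← max_sub_sub_right, sub_self]
  exact max_le_max (by linarith) le_rfl

namespace ParentTree

variable {V : Type*} (T : ParentTree V)

theorem anc_trans {i j k : V} (hij : T.anc i j) (hjk : T.anc j k) : T.anc i k := by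
  obtain ⟨hne, m, hm⟩ := hij
  obtain ⟨hne', n, hn⟩ := hjk
  refine ⟨?_, m + n, by rw [Function.iterate_add_apply, hn, hm]⟩
  rintro rfl
  have hm0 : m ≠ 0 := by rintro rfl; exact hne hm.symm
  have hn0 : n ≠ 0 := by rintro rfl; exact hne' hn.symm
  have hi := T.acyclic i (m + n) (by omega) (by rw [Function.iterate_add_apply, hn, hm])
  have hj := T.acyclic j (n + m) (by omega) (by rw [Function.iterate_add_apply, hm, hn])
  exact hne (hi.trans hj.symm)

theorem anc_trichotomy {a b v : V} (ha : T.anc a v) (hb : T.anc b v) :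
    a = b ∨ T.anc a b ∨ T.anc b a := by
  obtain ⟨-, m, hm⟩ := ha
  obtain ⟨-, n, hn⟩ := hb
  rcases eq_or_ne a b with hab | hab
  · exact .inl hab
  rcases le_total m n with h | h
  · refine .inr (.inr ⟨Ne.symm hab, n - m, ?_⟩)
    rw [← hm, ← Function.iterate_add_apply, Nat.sub_add_cancel h, hn]
  · refine .inr (.inl ⟨hab, m - n, ?_⟩)
    rw [← hn, ← Function.iterate_add_apply, Nat.sub_add_cancel h, hm]

def IsNearestAnc (S : Finset V) (i v : V) : Prop :=
  T.anc i v ∧ ∀ j ∈ S, T.anc i j → ¬T.anc j v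

theorem desc_diff_biUnion_eq (S : Finset V) (i : V) :
    T.desc i \ ⋃ j ∈ T.desc i ∩ (S : Set V), T.desc j = {v | T.IsNearestAnc S i v} := by
  ext v
  simp only [desc, IsNearestAnc, Set.mem_sdiff, Set.mem_ofPred_eq, Set.mem_iUnion,
    Set.mem_inter_iff, mem_coe, exists_prop, not_exists, not_and, and_congr_right_iff]
  exact fun _ => ⟨fun h j hj hij => h j ⟨hij, hj⟩, fun h j ⟨hij, hj⟩ => h j hj hij⟩

theorem nd_sub_ncard_biUnion [Fintype V] (S : Finset V) (i : V)
    [DecidablePred (T.IsNearestAnc S i)] :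
    (T.nd i : ℝ) - ((⋃ j ∈ T.desc i ∩ (S : Set V), T.desc j).ncard : ℝ) =
      #{v | T.IsNearestAnc S i v} := by
  have hsub : ⋃ j ∈ T.desc i ∩ (S : Set V), T.desc j ⊆ T.desc i :=
    Set.iUnion₂_subset fun _ hj _ hv => T.anc_trans hj.1 hv
  rw [nd, ← Nat.cast_sub (Set.ncard_le_ncard hsub), ← Set.ncard_sdiff hsub,
    desc_diff_biUnion_eq, Set.ncard_eq_toFinset_card', Set.toFinset_ofPred]

open Classical in
noncomputable def maxAncWeight (p : V → ℝ) (S : Finset V) (v : V) : ℝ≥0 :=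
  S.sup fun i => if T.anc i v then (p i).toNNReal else 0

open Classical in
theorem reward_eq_sum_isNearestAnc [Fintype V] (p : V → ℝ) (S : Finset V) :
    T.reward p S = ∑ v, ∑ i ∈ S, if T.IsNearestAnc S i v then p i else 0 := by
  rw [sum_comm]
  refine sum_congr rfl fun i _ => ?_
  rw [T.nd_sub_ncard_biUnion, natCast_card_filter, sum_mul]
  simp only [boole_mul]

open Classical in
/-- Since `p` increases down the tree, the nearest `S`-ancestor of `v` is the heaviest one. -/
theorem sum_isNearestAnc_eq_maxAncWeight (p : V → ℝ) (hp0 : ∀ v, 0 ≤ p v)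
    (hpanc : ∀ i j, T.anc i j → p i < p j) (S : Finset V) (v : V) :
    ∑ i ∈ S, (if T.IsNearestAnc S i v then p i else 0) = T.maxAncWeight p S v := by
  rcases (S.filter (T.anc · v)).eq_empty_or_nonempty with hF | hF
  · rw [filter_eq_empty_iff] at hF
    have hzero : T.maxAncWeight p S v = 0 :=
      (Finset.sup_eq_bot_iff _ _).2 fun i hi => if_neg (hF hi)
    rw [sum_eq_zero fun i hi => if_neg fun h => hF hi h.1, hzero, NNReal.coe_zero]
  obtain ⟨b, hbF, hbmax⟩ := (S.filter (T.anc · v)).exists_max_image p hF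
  rw [mem_filter] at hbF
  have hb : T.IsNearestAnc S b v := ⟨hbF.2, fun j hjS hbj hjv =>
    (hpanc b j hbj).not_ge (hbmax j (mem_filter.2 ⟨hjS, hjv⟩))⟩
  have hsum : ∑ i ∈ S, (if T.IsNearestAnc S i v then p i else 0) = p b := by
    refine (sum_eq_single_of_mem b hbF.1 fun i hiS hib => if_neg ?_).trans (if_pos hb)
    rintro ⟨hiv, hi⟩
    rcases T.anc_trichotomy hiv hbF.2 with h | h | h
    · exact hib h
    · exact hi b hbF.1 h hbF.2
    · exact hb.2 i hiS h hiv
  have hmax : T.maxAncWeight p S v = (p b).toNNReal := by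
    refine le_antisymm (Finset.sup_le fun i hiS => ?_) (le_sup_of_le hbF.1 (by simp [hbF.2]))
    split_ifs with hiv
    · exact Real.toNNReal_le_toNNReal (hbmax i (mem_filter.2 ⟨hiS, hiv⟩))
    · exact zero_le
  rw [hsum, hmax, Real.coe_toNNReal _ (hp0 b)]

theorem reward_eq_sum_maxAncWeight [Fintype V] (p : V → ℝ) (hp0 : ∀ v, 0 ≤ p v)
    (hpanc : ∀ i j, T.anc i j → p i < p j) (S : Finset V) :
    T.reward p S = ∑ v, (T.maxAncWeight p S v : ℝ) := by
  rw [reward_eq_sum_isNearestAnc]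
  exact sum_congr rfl fun v _ => T.sum_isNearestAnc_eq_maxAncWeight p hp0 hpanc S v

end ParentTree

theorem reward_submodular_general {V : Type*} [Fintype V] [DecidableEq V] (T : ParentTree V) (p : V → ℝ)
    (hp0 : ∀ v, 0 ≤ p v)
    (hpanc : ∀ i j, T.anc i j → p i < p j)
    (S₁ S₂ : Finset V) (hsub : S₁ ⊆ S₂) (u : V) :
    T.reward p (insert u S₁) - T.reward p S₁ ≥ T.reward p (insert u S₂) - T.reward p S₂ := by
  simp only [T.reward_eq_sum_maxAncWeight p hp0 hpanc, ← sum_sub_distrib]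
  exact sum_le_sum fun v _ => NNReal.sup_insert_sub_sup_le _ hsub u

/-- The reward function `r(S) = Σ_{i∈S} (n_i - |∪_{j∈N_i∩S} N_j|)·p_i` is submodular:
for `S₁ ⊆ S₂` and `u ∉ S₂`, the marginal gain of adding `u` to `S₁` is at least
the marginal gain of adding `u` to `S₂`. -/
theorem reward_submodular {V : Type*} [Fintype V] [DecidableEq V] (T : ParentTree V) (p : V → ℝ)
    (hp0 : ∀ v, 0 ≤ p v) (hp1 : ∀ v, p v ≤ 1)
    (hpanc : ∀ i j, T.anc i j → p i < p j)
    (S₁ S₂ : Finset V) (hsub : S₁ ⊆ S₂) (u : V) (hu : u ∉ S₂) :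
    T.reward p (insert u S₁) - T.reward p S₁ ≥ T.reward p (insert u S₂) - T.reward p S₂ :=
  reward_submodular_general T p hp0 hpanc S₁ S₂ hsub u
end

section
/- If v is u's unique ancestor in S (S ∩ A_u = {v}), then the marginal gain of adding u is Δ(S,u) = (n_u - |∪_{j∈N_u∩S} N_j|)·(p_u - p_v). -/
open MeasureTheory ProbabilityTheory

open ParentTree

/-! Inserting `u` leaves every term of `S` unchanged except those of the ancestors of `u`, whose
covered sets grow by `desc u`. With `v` the only such ancestor, the part of `desc u` newly covered
at `v` is `desc u` minus what the members of `S` below `u` already cover, which is exactly the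
bracket in the term that `u` itself contributes. -/

namespace ParentTree

variable {V : Type*} (T : ParentTree V)

theorem anc_trans_s11 {a b c : V} (hab : T.anc a b) (hbc : T.anc b c) : T.anc a c := by
  obtain ⟨hab_ne, n, rfl⟩ := hab
  obtain ⟨hbc_ne, m, rfl⟩ := hbc
  refine ⟨fun hca => ?_, n + m, Function.iterate_add_apply ..⟩
  have hn : n ≠ 0 := by rintro rfl; exact hab_ne rfl
  -- `c` would lie on a cycle, which the tree only allows at its fixed root.
  have hc_root : c = T.root :=
    T.acyclic c (n + m) (by omega) (by rw [Function.iterate_add_apply]; exact hca)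
  apply hbc_ne
  rw [hc_root, Function.iterate_fixed T.parent_root]

theorem anc_or_anc_of_anc_of_anc {a b w : V} (ha : T.anc a w) (hb : T.anc b w) (hab : a ≠ b) :
    T.anc a b ∨ T.anc b a := by
  obtain ⟨-, m, rfl⟩ := ha
  obtain ⟨-, k, rfl⟩ := hb
  rcases le_total m k with h | h
  · refine Or.inr ⟨hab.symm, k - m, ?_⟩
    rw [← Function.iterate_add_apply, Nat.sub_add_cancel h]
  · refine Or.inl ⟨hab, m - k, ?_⟩
    rw [← Function.iterate_add_apply, Nat.sub_add_cancel h]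

theorem desc_subset_desc {i j : V} (hij : T.anc i j) : T.desc j ⊆ T.desc i :=
  fun _ hw => T.anc_trans_s11 hij hw

theorem notMem_desc_self (u : V) : u ∉ T.desc u := fun h => h.1 rfl

def covered (S : Set V) (i : V) : Set V := ⋃ j ∈ T.desc i ∩ S, T.desc j

theorem reward_eq (p : V → ℝ) (S : Finset V) :
    T.reward p S = ∑ i ∈ S, ((T.nd i : ℝ) - (T.covered S i).ncard) * p i := rfl

theorem covered_insert_of_notMem {S : Set V} {u i : V} (h : u ∉ T.desc i) :
    T.covered (insert u S) i = T.covered S i := by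
  rw [covered, Set.inter_insert_of_notMem h, covered]

theorem covered_insert_of_mem {S : Set V} {u i : V} (h : u ∈ T.desc i) :
    T.covered (insert u S) i = T.desc u ∪ T.covered S i := by
  rw [covered, Set.inter_insert_of_mem h, Set.biUnion_insert, covered]

theorem desc_inter_covered_eq {S : Set V} {u v : V} (hu : u ∉ S) (hvu : T.anc v u)
    (huniq : ∀ a ∈ S, T.anc a u → a = v) :
    T.desc u ∩ T.covered S v = T.covered S u := by
  ext w
  simp only [covered, Set.mem_inter_iff, Set.mem_iUnion, exists_prop]
  constructor
  · rintro ⟨hwu, j, ⟨hvj, hjS⟩, hwj⟩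
    have hju : j ≠ u := by rintro rfl; exact hu hjS
    rcases T.anc_or_anc_of_anc_of_anc hwj hwu hju with hj_u | hu_j
    · exact absurd (huniq j hjS hj_u).symm hvj.1
    · exact ⟨j, ⟨hu_j, hjS⟩, hwj⟩
  · rintro ⟨j, ⟨hu_j, hjS⟩, hwj⟩
    exact ⟨T.desc_subset_desc hu_j hwj, j, ⟨T.desc_subset_desc hvu hu_j, hjS⟩, hwj⟩

-- At each ancestor `i ∈ S` of `u`, the newly covered part `desc u \ covered S i` is lost.
open Classical in
theorem reward_insert_sub [Finite V] [DecidableEq V] (p : V → ℝ) {S : Finset V} {u : V}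
    (hu : u ∉ S) :
    T.reward p (insert u S) - T.reward p S
      = ((T.nd u : ℝ) - (T.covered S u).ncard) * p u
        - ∑ i ∈ S with T.anc i u, ((T.nd u : ℝ) - (T.desc u ∩ T.covered S i).ncard) * p i := by
  have hterm : ∀ i ∈ S,
      ((T.nd i : ℝ) - (T.covered (insert u S) i).ncard) * p i
        - ((T.nd i : ℝ) - (T.covered S i).ncard) * p i
      = if T.anc i u then -(((T.nd u : ℝ) - (T.desc u ∩ T.covered S i).ncard) * p i) else 0 := by
    intro i _
    split_ifs with hiu
    · have hcard : ((T.desc u ∪ T.covered S i).ncard : ℝ) + (T.desc u ∩ T.covered S i).ncard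
          = T.nd u + (T.covered S i).ncard := by
        exact_mod_cast Set.ncard_union_add_ncard_inter (T.desc u) (T.covered S i)
      rw [T.covered_insert_of_mem hiu]
      linear_combination -p i * hcard
    · rw [T.covered_insert_of_notMem hiu, sub_self]
  rw [reward_eq, reward_eq, Finset.coe_insert, Finset.sum_insert hu,
    T.covered_insert_of_notMem (T.notMem_desc_self u), add_sub_assoc,
    ← Finset.sum_sub_distrib, Finset.sum_congr rfl hterm, ← Finset.sum_filter,
    Finset.sum_neg_distrib]
  ring

end ParentTree

/-- If `v` is `u`'s unique ancestor in `S` (`S ∩ A_u = {v}`), then the marginal gain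
of adding `u` is `(n_u - |∪_{j∈N_u∩S} N_j|)·(p_u - p_v)`. -/
theorem marginal_gain_unique_ancestor {V : Type*} [Fintype V] [DecidableEq V]
    (T : ParentTree V) (p : V → ℝ)
    (S : Finset V) (u v : V) (hu : u ∉ S)
    (hv : v ∈ S) (hvu : T.anc v u) (huniq : ∀ a ∈ S, T.anc a u → a = v) :
    T.reward p (insert u S) - T.reward p S
      = ((T.nd u : ℝ) - ((⋃ j ∈ T.desc u ∩ (S : Set V), T.desc j).ncard : ℝ))
          * (p u - p v) := by
  classical
  have hanc : S.filter (T.anc · u) = {v} :=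
    Finset.eq_singleton_iff_unique_mem.2
      ⟨Finset.mem_filter.2 ⟨hv, hvu⟩, fun a ha => huniq a (Finset.mem_filter.1 ha).1
        (Finset.mem_filter.1 ha).2⟩
  rw [T.reward_insert_sub p hu, hanc, Finset.sum_singleton,
    T.desc_inter_covered_eq (Finset.mem_coe.not.2 hu) hvu huniq, covered]
  ring
end
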